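/- For r ≥ 3 there exists ε_r > 0 such that for every p ∈ (1/2 − ε_r, 1/2) there exists C(p) > 0 with |C_0^{d,p}| / e^{C(p)d} → +∞ in probability as d → ∞; one may take C(p) = (log r − K(p))/2 with K(p) = −log(4p(1−p)). -/

import Mathlib

/-!
Choose a set `S` of vertices of `T^d(r)` with pairwise disjoint neighbourhoods; a greedy choice
gives `|S| ≥ r^d / (4d² + 1)`. For `x ∈ S` the events `x ∈ C₀` depend on disjoint sets of
coordinates, hence are pairwise independent, and each has probability at least
`C(2d, d) p^d (1-p)^d ≥ (4p(1-p))^d / (2d + 1)`. So the number of points of `S` lying in `C₀` has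
mean `m ≥ (r · 4p(1-p))^d / poly(d) = e^{2C(p)d} / poly(d)` and variance at most `m`, and
Chebyshev's inequality shows that it is at least `m / 2` except with probability `4 / m`. Since
`m / e^{C(p)d} → ∞`, this proves the claim; `C(p) > 0` because `r · 4p(1-p) > 1` once `p > 1/4`.
-/

open MeasureTheory ProbabilityTheory

/-- `x` and `y` are neighbors on the torus `T^d(r) = (ZMod r)^d` iff they differ
by `±1 (mod r)` in exactly one coordinate. -/
def torusAdj (d r : ℕ) (x y : Fin d → ZMod r) : Prop :=
  ∃ i : Fin d, y = Function.update x i (x i + 1) ∨ y = Function.update x i (x i - 1)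

/-- The product Bernoulli(p) measure on configurations of `T^d(r)`. -/
noncomputable def bernoulliField (d r : ℕ) (hr : NeZero r) (p : ℝ) (hp : p ≤ 1) :
    Measure ((Fin d → ZMod r) → Bool) :=
  haveI := hr
  Measure.pi fun _ => (PMF.bernoulli (Real.toNNReal p) (Real.toNNReal_le_one.mpr hp)).toMeasure

open Finset Filter Topology

theorem exists_pairwise_not_rel_card_le_mul {α : Type*} [Fintype α] (R : α → α → Prop)
    [DecidableRel R] (hsymm : ∀ x y, R x y → R y x) (hrefl : ∀ x, R x x) {K : ℕ}
    (hK : ∀ x, #{y | R x y} ≤ K) :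
    ∃ S : Finset α, (S : Set α).Pairwise (fun x y => ¬ R x y) ∧ Fintype.card α ≤ #S * K := by
  classical
  obtain ⟨S, hS, hmax⟩ := exists_max_image
    (univ.powerset.filter fun S : Finset α => (S : Set α).Pairwise fun x y => ¬ R x y) card
    ⟨∅, by simp⟩
  simp only [mem_filter, mem_powerset, subset_univ, true_and] at hS hmax
  -- a maximum packing is also a covering
  have hcover : ∀ z, ∃ x ∈ S, R x z := by
    by_contra! h
    obtain ⟨z, hz⟩ := h
    have hzS : z ∉ S := fun hzS => hz z hzS (hrefl z)
    have := hmax (insert z S) <| by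
      rw [coe_insert, Set.pairwise_insert]
      exact ⟨hS, fun x hx _ => ⟨fun hzx => hz x hx (hsymm _ _ hzx), hz x hx⟩⟩
    rw [card_insert_of_notMem hzS] at this
    omega
  refine ⟨S, hS, ?_⟩
  calc Fintype.card α ≤ #(S.biUnion fun x => {y | R x y}) := by
        rw [← card_univ]
        refine card_le_card fun z _ => ?_
        simpa using hcover z
    _ ≤ ∑ x ∈ S, #{y | R x y} := card_biUnion_le
    _ ≤ #S * K := by simpa using sum_le_sum fun x _ => hK x

lemma tendsto_exp_mul_div_poly_atTop {c : ℝ} (hc : 0 < c) :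
    Tendsto (fun d : ℕ => Real.exp (c * d) / (((2 * d) ^ 2 + 1) * (2 * d + 1))) atTop atTop := by
  have hcube : Tendsto (fun d : ℕ => Real.exp (c * d) / (d : ℝ) ^ 3 / 15) atTop atTop := by
    refine ((tendsto_exp_mul_div_rpow_atTop 3 c hc).comp
      tendsto_natCast_atTop_atTop).atTop_div_const (by norm_num : (0 : ℝ) < 15) |>.congr fun d => ?_
    simp only [Function.comp_apply, ← Real.rpow_natCast, Nat.cast_ofNat]
  refine tendsto_atTop_mono' atTop ?_ hcube
  filter_upwards [eventually_ge_atTop 1] with d hd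
  have hd : (1 : ℝ) ≤ d := by exact_mod_cast hd
  rw [div_div, div_le_div_iff_of_pos_left (Real.exp_pos _) (by positivity) (by positivity)]
  nlinarith [pow_le_pow_left₀ zero_le_one hd 3]

lemma four_mul_pow_div_le_choose_mul {a : ℝ} (ha : 0 ≤ a) (d : ℕ) :
    (4 * a) ^ d / (2 * d + 1) ≤ (2 * d).choose d * a ^ d := by
  have h4 : (4 : ℝ) ^ d ≤ (2 * d + 1) * (2 * d).choose d := by
    exact_mod_cast Nat.four_pow_le_two_mul_add_one_mul_central_binom d
  rw [div_le_iff₀ (by positivity), mul_pow]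
  nlinarith [pow_nonneg ha d]

section SecondMoment

variable {Ω ι : Type*} [MeasurableSpace Ω] {μ : Measure Ω} [IsProbabilityMeasure μ]

theorem measure_ncard_lt_le_of_pairwise_indepFun {A : ι → Set Ω} (hA : ∀ i, MeasurableSet (A i))
    {S : Finset ι}
    (hind : (S : Set ι).Pairwise fun i j =>
      IndepFun ((A i).indicator (1 : Ω → ℝ)) ((A j).indicator (1 : Ω → ℝ)) μ)
    (hm : 0 < ∑ i ∈ S, μ.real (A i)) {t : ℝ} (ht : t ≤ (∑ i ∈ S, μ.real (A i)) / 2) :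
    μ {ω | ({i ∈ (S : Set ι) | ω ∈ A i}.ncard : ℝ) < t}
      ≤ ENNReal.ofReal (4 / ∑ i ∈ S, μ.real (A i)) := by
  classical
  set m := ∑ i ∈ S, μ.real (A i)
  set X : Ω → ℝ := ∑ i ∈ S, (A i).indicator 1
  have hmemLp : ∀ i, MemLp ((A i).indicator (1 : Ω → ℝ)) 2 μ := fun i =>
    memLp_indicator_const 2 (hA i) 1 (.inr (measure_ne_top _ _))
  have hX : ∀ ω, X ω = {i ∈ (S : Set ι) | ω ∈ A i}.ncard := fun ω => by
    have : {i ∈ (S : Set ι) | ω ∈ A i} = ↑(S.filter (ω ∈ A ·)) := by ext; simp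
    rw [this, Set.ncard_coe_finset]
    simp [X, Finset.sum_apply, Set.indicator_apply]
  have hmean : μ[X] = m := by
    simp only [X, Finset.sum_apply]
    rw [integral_finsetSum S fun i _ => (hmemLp i).integrable one_le_two]
    exact sum_congr rfl fun i _ => integral_indicator_one (hA i)
  have hvar : variance X μ ≤ m := by
    rw [IndepFun.variance_sum (fun i _ => hmemLp i) hind]
    refine sum_le_sum fun i _ => (variance_le_expectation_sq
      (hmemLp i).aestronglyMeasurable).trans_eq ?_
    rw [← integral_indicator_one (hA i)]
    congr 1
    ext ω
    by_cases h : ω ∈ A i <;> simp [h]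
  calc μ {ω | ({i ∈ (S : Set ι) | ω ∈ A i}.ncard : ℝ) < t}
      ≤ μ {ω | m / 2 ≤ |X ω - μ[X]|} := by
        refine measure_mono fun ω hω => ?_
        simp only [Set.mem_ofPred_eq, hmean, ← hX] at hω ⊢
        rw [abs_sub_comm]
        exact le_abs.mpr (.inl (by linarith))
    _ ≤ ENNReal.ofReal (variance X μ / (m / 2) ^ 2) :=
        meas_ge_le_variance_div_sq (memLp_finsetSum' _ fun i _ => hmemLp i) (by linarith)
    _ ≤ ENNReal.ofReal (4 / m) := by
        refine ENNReal.ofReal_le_ofReal ?_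
        calc variance X μ / (m / 2) ^ 2 ≤ m / (m / 2) ^ 2 := by gcongr
          _ = 4 / m := by field_simp; ring

end SecondMoment

section ProductMeasure

variable {ι β : Type*} [Fintype ι] [MeasurableSpace β]

theorem indepFun_pi_of_eqOn {γ δ : Type*} [MeasurableSpace γ] [MeasurableSpace δ]
    [Countable β] [MeasurableSingletonClass β] [Nonempty β]
    {ν : ι → Measure β} [∀ i, IsProbabilityMeasure (ν i)] {S T : Finset ι} (hST : Disjoint S T)
    {f : (ι → β) → γ} {g : (ι → β) → δ}
    (hf : ∀ η η', Set.EqOn η η' S → f η = f η') (hg : ∀ η η', Set.EqOn η η' T → g η = g η') :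
    IndepFun f g (Measure.pi ν) := by
  classical
  let extend (U : Finset ι) (ξ : U → β) : ι → β := fun i =>
    if h : i ∈ U then ξ ⟨i, h⟩ else Classical.arbitrary β
  have hextend : ∀ (U : Finset ι) η, Set.EqOn (extend U fun i => η i) η U := fun U η i hi => by
    simp [extend, Finset.mem_coe.mp hi]
  have hfS : f = (f ∘ extend S) ∘ fun η (i : S) => η i := funext fun η => hf _ _ (hextend S η).symm
  have hgT : g = (g ∘ extend T) ∘ fun η (i : T) => η i := funext fun η => hg _ _ (hextend T η).symm
  have hcoord : iIndepFun (fun i (η : ι → β) => η i) (Measure.pi ν) :=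
    iIndepFun_pi (X := fun _ => id) fun _ => aemeasurable_id
  rw [hfS, hgT]
  exact (hcoord.indepFun_finset S T hST fun i => measurable_pi_apply i).comp
    (measurable_of_countable _) (measurable_of_countable _)

variable [DecidableEq ι] {ν : Measure Bool} [IsProbabilityMeasure ν]

lemma measure_pi_forall_mem_iff (N : Finset ι) {T : Finset ι} (hTN : T ⊆ N) :
    Measure.pi (fun _ : ι => ν) {η | ∀ i ∈ N, η i = true ↔ i ∈ T}
      = ν {true} ^ #T * ν {false} ^ (#N - #T) := by
  have hpi : {η : ι → Bool | ∀ i ∈ N, η i = true ↔ i ∈ T}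
      = Set.univ.pi fun i => if i ∈ N then {decide (i ∈ T)} else Set.univ := by
    ext η
    simp only [Set.mem_ofPred_eq, Set.mem_univ_pi]
    refine forall_congr' fun i => ?_
    by_cases hN : i ∈ N <;> by_cases hT : i ∈ T <;> simp [hN, hT]
  have hfactor : ∀ i, ν (if i ∈ N then {decide (i ∈ T)} else Set.univ)
      = if i ∈ N then (if i ∈ T then ν {true} else ν {false}) else 1 := fun i => by
    by_cases hN : i ∈ N
    · by_cases hT : i ∈ T <;> simp [hN, hT]
    · simp only [hN, if_false, measure_univ]
  simp only [hpi, Measure.pi_pi, hfactor, prod_ite_mem, univ_inter, prod_ite, prod_const,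
    filter_mem_eq_inter, inter_eq_right.mpr hTN]
  rw [← card_sdiff_of_subset hTN]
  congr 3
  ext i
  simp

theorem le_measure_pi_le_card_filter (N : Finset ι) (k : ℕ) :
    (#N).choose k * (ν {true} ^ k * ν {false} ^ (#N - k))
      ≤ Measure.pi (fun _ : ι => ν) {η | k ≤ #{i ∈ N | η i = true}} := by
  set cyl : Finset ι → Set (ι → Bool) := fun T => {η | ∀ i ∈ N, η i = true ↔ i ∈ T}
  have hsub : ∀ T ∈ N.powersetCard k, cyl T ⊆ {η | k ≤ #{i ∈ N | η i = true}} := by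
    intro T hT η hη
    obtain ⟨hTN, rfl⟩ := mem_powersetCard.mp hT
    refine card_le_card fun i hi => mem_filter.mpr ⟨hTN hi, (hη i (hTN hi)).mpr hi⟩
  have hdisj : (N.powersetCard k : Set (Finset ι)).PairwiseDisjoint cyl := by
    intro T hT T' hT' hne
    obtain ⟨i, hiT, hiT'⟩ : ∃ i ∈ T, i ∉ T' := not_subset.mp fun hsub => hne <|
      eq_of_subset_of_card_le hsub
        ((mem_powersetCard.mp hT').2.trans (mem_powersetCard.mp hT).2.symm).le
    have hiN := (mem_powersetCard.mp hT).1 hiT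
    exact Set.disjoint_left.mpr fun η h h' => hiT' ((h' i hiN).mp ((h i hiN).mpr hiT))
  calc (#N).choose k * (ν {true} ^ k * ν {false} ^ (#N - k))
      = ∑ T ∈ N.powersetCard k, Measure.pi (fun _ : ι => ν) (cyl T) := by
        rw [sum_congr rfl fun T hT => by
          rw [measure_pi_forall_mem_iff N (mem_powersetCard.mp hT).1, (mem_powersetCard.mp hT).2]]
        simp
    _ = Measure.pi (fun _ : ι => ν) (⋃ T ∈ N.powersetCard k, cyl T) :=
        (measure_biUnion_finset hdisj fun T _ => (Set.toFinite _).measurableSet).symm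
    _ ≤ _ := measure_mono (Set.iUnion₂_subset hsub)

end ProductMeasure

section Torus

variable {d r : ℕ}

/-- The `Bool` records the sign of the step. -/
def torusNbr (x : Fin d → ZMod r) (s : Fin d × Bool) : Fin d → ZMod r :=
  Function.update x s.1 (x s.1 + if s.2 then 1 else -1)

lemma torusAdj_iff_exists_torusNbr {x y : Fin d → ZMod r} :
    torusAdj d r x y ↔ ∃ s, torusNbr x s = y := by
  constructor
  · rintro ⟨i, rfl | rfl⟩
    · exact ⟨(i, true), by simp [torusNbr]⟩
    · exact ⟨(i, false), by simp [torusNbr, sub_eq_add_neg]⟩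
  · rintro ⟨⟨i, _ | _⟩, rfl⟩
    · exact ⟨i, .inr (by simp [torusNbr, sub_eq_add_neg])⟩
    · exact ⟨i, .inl (by simp [torusNbr])⟩

lemma torusAdj_symm {x y : Fin d → ZMod r} (h : torusAdj d r x y) : torusAdj d r y x := by
  obtain ⟨i, rfl | rfl⟩ := h
  · exact ⟨i, .inr (by simp)⟩
  · exact ⟨i, .inl (by simp)⟩

lemma torusNbr_injective (hr : 2 < r) (x : Fin d → ZMod r) : Function.Injective (torusNbr x) := by
  have : Fact (1 < r) := ⟨by omega⟩
  have : Fact (2 < r) := ⟨hr⟩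
  have hsign : ∀ b : Bool, (if b then 1 else -1 : ZMod r) ≠ 0 := by
    rintro (_ | _) <;> simp
  rintro ⟨i, b⟩ ⟨j, c⟩ h
  obtain rfl : i = j := by
    by_contra hij
    have := congrFun h i
    simp [torusNbr, Function.update_of_ne hij] at this
    exact hsign b this
  have := congrFun h i
  simp only [torusNbr, Function.update_self, add_right_inj] at this
  cases b <;> cases c <;> simp_all [ZMod.neg_one_ne_one, (ZMod.neg_one_ne_one (n := r)).symm]

def torusNbhd (x : Fin d → ZMod r) : Finset (Fin d → ZMod r) :=
  univ.image (torusNbr x)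

lemma mem_torusNbhd {x y : Fin d → ZMod r} : y ∈ torusNbhd x ↔ torusAdj d r x y := by
  simp [torusNbhd, torusAdj_iff_exists_torusNbr]

lemma card_torusNbhd (hr : 2 < r) (x : Fin d → ZMod r) : #(torusNbhd x) = 2 * d := by
  rw [torusNbhd, card_image_of_injective _ (torusNbr_injective hr x)]
  simp [mul_comm]

lemma ncard_torusAdj_true (x : Fin d → ZMod r) (η : (Fin d → ZMod r) → Bool) :
    {y | torusAdj d r x y ∧ η y = true}.ncard = #{y ∈ torusNbhd x | η y = true} := by
  rw [← Set.ncard_coe_finset]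
  congr 1
  ext y
  simp [mem_torusNbhd]

lemma setOf_torusAdj_true_eq_of_eqOn {x : Fin d → ZMod r} {η η' : (Fin d → ZMod r) → Bool}
    (h : Set.EqOn η η' (torusNbhd x)) :
    {y | torusAdj d r x y ∧ η y = true} = {y | torusAdj d r x y ∧ η' y = true} := by
  ext y
  simp only [Set.mem_ofPred_eq, and_congr_right_iff]
  intro hy
  rw [h (mem_torusNbhd.mpr hy)]

variable [NeZero r]

lemma card_not_disjoint_torusNbhd_le (x : Fin d → ZMod r) :
    #{y | x = y ∨ ¬ Disjoint (torusNbhd x) (torusNbhd y)} ≤ (2 * d) ^ 2 + 1 := by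
  calc _ ≤ #(insert x (univ.image fun s : (Fin d × Bool) × (Fin d × Bool) =>
        torusNbr (torusNbr x s.1) s.2)) := by
        refine card_le_card fun y hy => ?_
        simp only [mem_filter, mem_univ, true_and, not_disjoint_iff, mem_torusNbhd] at hy
        obtain rfl | ⟨w, hxw, hyw⟩ := hy
        · exact mem_insert_self _ _
        obtain ⟨a, rfl⟩ := torusAdj_iff_exists_torusNbr.mp hxw
        obtain ⟨b, rfl⟩ := torusAdj_iff_exists_torusNbr.mp (torusAdj_symm hyw)
        exact mem_insert_of_mem (mem_image_of_mem _ (mem_univ (a, b)))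
    _ ≤ (2 * d) ^ 2 + 1 := by
        refine (card_insert_le _ _).trans (Nat.add_le_add_right (card_image_le.trans ?_) 1)
        simp [sq, mul_comm]

lemma exists_pairwise_disjoint_torusNbhd :
    ∃ S : Finset (Fin d → ZMod r),
      (S : Set (Fin d → ZMod r)).Pairwise (fun x y => Disjoint (torusNbhd x) (torusNbhd y)) ∧
      r ^ d ≤ #S * ((2 * d) ^ 2 + 1) := by
  classical
  obtain ⟨S, hS, hcard⟩ := exists_pairwise_not_rel_card_le_mul
    (fun x y : Fin d → ZMod r => x = y ∨ ¬ Disjoint (torusNbhd x) (torusNbhd y))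
    (fun x y h => h.imp Eq.symm fun h' => by rwa [disjoint_comm]) (fun x => .inl rfl)
    card_not_disjoint_torusNbhd_le
  refine ⟨S, fun x hx y hy hxy => ?_, by simpa [ZMod.card] using hcard⟩
  simpa [hxy] using hS hx hy hxy

end Torus

section TorusProbability

variable {d r : ℕ} [hr0 : NeZero r] {p : ℝ}

lemma bernoulliField_eq_pi (hp : p ≤ 1) :
    bernoulliField d r hr0 p hp = Measure.pi fun _ =>
      (PMF.bernoulli p.toNNReal (Real.toNNReal_le_one.mpr hp)).toMeasure := rfl

lemma PMF.toMeasure_bernoulli_true (hp : p ≤ 1) :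
    (PMF.bernoulli p.toNNReal (Real.toNNReal_le_one.mpr hp)).toMeasure {true} = .ofReal p := by
  simp [PMF.bernoulli_apply, ENNReal.ofReal]

lemma PMF.toMeasure_bernoulli_false (hp0 : 0 ≤ p) (hp : p ≤ 1) :
    (PMF.bernoulli p.toNNReal (Real.toNNReal_le_one.mpr hp)).toMeasure {false}
      = .ofReal (1 - p) := by
  simp only [PMF.toMeasure_apply_singleton _ _ (measurableSet_singleton _), PMF.bernoulli_apply,
    cond_false, ENNReal.ofReal]
  congr 1
  ext
  simp [Real.toNNReal_le_one.mpr hp, hp0, hp]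

instance (hp : p ≤ 1) : IsProbabilityMeasure (bernoulliField d r hr0 p hp) := by
  rw [bernoulliField_eq_pi]
  infer_instance

lemma ofReal_le_bernoulliField_torusAdj (hr : 2 < r) (hp0 : 0 ≤ p) (hp : p ≤ 1)
    (x : Fin d → ZMod r) :
    ENNReal.ofReal ((4 * p * (1 - p)) ^ d / (2 * d + 1))
      ≤ bernoulliField d r hr0 p hp {η | d ≤ {y | torusAdj d r x y ∧ η y = true}.ncard} := by
  have h1p : 0 ≤ 1 - p := by linarith
  have key := le_measure_pi_le_card_filter
    (ν := (PMF.bernoulli p.toNNReal (Real.toNNReal_le_one.mpr hp)).toMeasure) (torusNbhd x) d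
  rw [card_torusNbhd hr, PMF.toMeasure_bernoulli_true hp, PMF.toMeasure_bernoulli_false hp0 hp,
    show 2 * d - d = d by omega] at key
  simp only [ncard_torusAdj_true, bernoulliField_eq_pi]
  calc ENNReal.ofReal ((4 * p * (1 - p)) ^ d / (2 * d + 1))
      ≤ ENNReal.ofReal ((2 * d).choose d * (p * (1 - p)) ^ d) := ENNReal.ofReal_le_ofReal <| by
        simpa only [mul_assoc] using four_mul_pow_div_le_choose_mul (mul_nonneg hp0 h1p) d
    _ = _ := by
        rw [ENNReal.ofReal_mul (by positivity), ENNReal.ofReal_natCast, mul_pow,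
          ENNReal.ofReal_mul (by positivity), ENNReal.ofReal_pow hp0, ENNReal.ofReal_pow h1p]
    _ ≤ _ := key

theorem bernoulliField_ncard_lt_le (hr : 2 < r) (hp0 : 0 < p) (hp1 : p < 1) {t : ℝ}
    (ht : 2 * t ≤ (r * (4 * p * (1 - p))) ^ d / (((2 * d) ^ 2 + 1) * (2 * d + 1))) :
    bernoulliField d r hr0 p hp1.le
        {η | ({x | d ≤ {y | torusAdj d r x y ∧ η y = true}.ncard}.ncard : ℝ) < t}
      ≤ ENNReal.ofReal (4 / ((r * (4 * p * (1 - p))) ^ d / (((2 * d) ^ 2 + 1) * (2 * d + 1)))) := by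
  set μ := bernoulliField d r hr0 p hp1.le
  set L : ℝ := (r * (4 * p * (1 - p))) ^ d / (((2 * d) ^ 2 + 1) * (2 * d + 1))
  set A : (Fin d → ZMod r) → Set ((Fin d → ZMod r) → Bool) :=
    fun x => {η | d ≤ {y | torusAdj d r x y ∧ η y = true}.ncard}
  obtain ⟨S, hS, hcard⟩ := exists_pairwise_disjoint_torusNbhd (d := d) (r := r)
  have hq : ∀ x, (4 * p * (1 - p)) ^ d / (2 * d + 1) ≤ μ.real (A x) := fun x =>
    (ENNReal.ofReal_le_iff_le_toReal (measure_ne_top _ _)).mp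
      (ofReal_le_bernoulliField_torusAdj hr hp0.le hp1.le x)
  have hLpos : 0 < L := by
    have : 0 < 4 * p * (1 - p) := by nlinarith
    positivity
  have hLm : L ≤ ∑ x ∈ S, μ.real (A x) := by
    have hS' : (r : ℝ) ^ d / ((2 * d) ^ 2 + 1) ≤ #S := by
      rw [div_le_iff₀ (by positivity)]
      exact_mod_cast hcard
    calc L = (r : ℝ) ^ d / ((2 * d) ^ 2 + 1) * ((4 * p * (1 - p)) ^ d / (2 * d + 1)) := by
          rw [div_mul_div_comm, ← mul_pow]
      _ ≤ #S * ((4 * p * (1 - p)) ^ d / (2 * d + 1)) := by gcongr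
      _ ≤ ∑ x ∈ S, μ.real (A x) := by
          simpa using card_nsmul_le_sum S _ _ fun x _ => hq x
  have hlocal : ∀ x η η', Set.EqOn η η' (torusNbhd x) →
      (A x).indicator (1 : ((Fin d → ZMod r) → Bool) → ℝ) η = (A x).indicator 1 η' :=
    fun x η η' h => by simp only [A, Set.indicator_apply, Set.mem_ofPred_eq,
      setOf_torusAdj_true_eq_of_eqOn h, Pi.one_apply]
  have hind : (S : Set (Fin d → ZMod r)).Pairwise fun x y =>
      IndepFun ((A x).indicator (1 : ((Fin d → ZMod r) → Bool) → ℝ)) ((A y).indicator 1) μ :=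
    fun x hx y hy hxy => indepFun_pi_of_eqOn (hS hx hy hxy) (hlocal x) (hlocal y)
  calc μ {η | ({x | d ≤ {y | torusAdj d r x y ∧ η y = true}.ncard}.ncard : ℝ) < t}
      ≤ μ {η | ({x ∈ (S : Set (Fin d → ZMod r)) | η ∈ A x}.ncard : ℝ) < t} := by
        refine measure_mono fun η (hη : _ < t) => show _ < t from lt_of_le_of_lt ?_ hη
        exact_mod_cast Set.ncard_le_ncard (by intro x hx; exact hx.2) (Set.toFinite _)
    _ ≤ ENNReal.ofReal (4 / ∑ x ∈ S, μ.real (A x)) :=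
        measure_ncard_lt_le_of_pairwise_indepFun (fun x => (Set.toFinite _).measurableSet) hind
          (hLpos.trans_le hLm) (by linarith)
    _ ≤ ENNReal.ofReal (4 / L) := by gcongr

end TorusProbability

theorem tendsto_bernoulliField_ncard_div_exp_lt {r : ℕ} (hr : 2 < r) {p : ℝ} (hp0 : 0 < p)
    (hp1 : p < 1) (hrp : 1 < r * (4 * p * (1 - p))) (M : ℝ) :
    Tendsto (fun d : ℕ => bernoulliField d r ⟨by omega⟩ p hp1.le
        {η | ({x | d ≤ {y | torusAdj d r x y ∧ η y = true}.ncard}.ncard : ℝ)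
          / Real.exp (Real.log (r * (4 * p * (1 - p))) / 2 * d) < M})
      atTop (𝓝 0) := by
  have : NeZero r := ⟨by omega⟩
  set b : ℝ := r * (4 * p * (1 - p))
  set c := Real.log b / 2
  have hc : 0 < c := div_pos (Real.log_pos hrp) two_pos
  set g : ℕ → ℝ := fun d => Real.exp (c * d) / (((2 * d) ^ 2 + 1) * (2 * d + 1))
  have hg := tendsto_exp_mul_div_poly_atTop hc
  have hsplit : ∀ d : ℕ, b ^ d / (((2 * d) ^ 2 + 1) * (2 * d + 1)) = Real.exp (c * d) * g d :=
    fun d => by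
      have hpow : Real.exp (c * d) ^ 2 = b ^ d := by
        rw [← Real.exp_nat_mul, ← Real.exp_log (by linarith : 0 < b), ← Real.exp_nat_mul]
        congr 1
        simp only [c]
        push_cast
        ring
      rw [mul_div_assoc', ← sq, hpow]
  refine tendsto_of_tendsto_of_tendsto_of_le_of_le' tendsto_const_nhds
    (by simpa using ENNReal.tendsto_ofReal (hg.const_div_atTop 4)) (.of_forall fun _ => zero_le)
    ?_
  filter_upwards [hg.eventually_ge_atTop (2 * M), hg.eventually_ge_atTop 1] with d hgM hg1
  have he1 : 1 ≤ Real.exp (c * d) := Real.one_le_exp (by positivity)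
  simp_rw [div_lt_iff₀ (Real.exp_pos _)]
  calc _ ≤ ENNReal.ofReal (4 / (b ^ d / (((2 * d) ^ 2 + 1) * (2 * d + 1)))) :=
        bernoulliField_ncard_lt_le hr hp0 hp1 (by rw [hsplit]; nlinarith)
    _ ≤ ENNReal.ofReal (4 / g d) := by
        rw [hsplit]
        gcongr
        nlinarith

/-- For `r ≥ 3` there is `ε_r ∈ (0, 1/2)` such that for every
`p ∈ (1/2 − ε_r, 1/2)`, with `C(p) = (log r − K(p))/2 > 0` where
`K(p) = −log(4p(1−p))`, the number `|C₀^{d,p}|` of vertices of `T^d(r)` having at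
least `d` of their neighbors in state 1 (states i.i.d. Bernoulli(p)) satisfies
`|C₀^{d,p}|/e^{C(p)d} → +∞` in probability as `d → ∞`. -/
theorem stmt_13 (r : ℕ) (hr : 3 ≤ r) :
    ∃ εr : ℝ, 0 < εr ∧ εr < 1/2 ∧
      ∀ p : ℝ, ∀ _hp₁ : 1/2 - εr < p, ∀ _hp₂ : p < 1/2,
        0 < (Real.log r - (-Real.log (4 * p * (1 - p)))) / 2 ∧
        ∀ M : ℝ, 0 < M →
          Filter.Tendsto (fun d : ℕ =>
              bernoulliField d r ⟨by omega⟩ p (by linarith)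
                {η | (Set.ncard {x : Fin d → ZMod r |
                        d ≤ Set.ncard {y | torusAdj d r x y ∧ η y = true}} : ℝ)
                      / Real.exp
                          ((Real.log r - (-Real.log (4 * p * (1 - p)))) / 2 * d)
                    < M})
            Filter.atTop (nhds 0) := by
  refine ⟨1 / 4, by norm_num, by norm_num, fun p hp₁ hp₂ => ?_⟩
  have hr3 : (3 : ℝ) ≤ r := by exact_mod_cast hr
  have ha : 3 / 4 < 4 * p * (1 - p) := by nlinarith
  have hrp : 1 < r * (4 * p * (1 - p)) := by nlinarith
  have hC : (Real.log r - -Real.log (4 * p * (1 - p))) / 2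
      = Real.log (r * (4 * p * (1 - p))) / 2 := by
    rw [Real.log_mul (x := r) (by positivity) (by linarith)]
    ring
  rw [hC]
  exact ⟨div_pos (Real.log_pos hrp) two_pos,
    fun M _ => tendsto_bernoulliField_ncard_div_exp_lt hr (by linarith) (by linarith) hrp M⟩
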